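/- Permuting reduces to LZ77 decoding: let x_1,...,x_n be strings each of the same length h ≥ 1 over alphabet [0..σ-1], let π be a permutation of [1..n], and let X be the concatenation x_1 x_2 ... x_n. Define a phrase list over the string X·Y of length 2nh where the first nh positions are covered by literal phrases spelling X and, for each 1 ≤ i ≤ n, positions [nh + (i-1)h + 1 .. nh + ih] are covered by the repeat phrase with source position (π(i)-1)h + 1 and length h. Then this phrase list is a valid LZ77-type encoding, and the unique string it decodes to is X·Y where Y = x_{π(1)} x_{π(2)} ... x_{π(n)}. -/

import Mathlib

/-! The literal phrases force the first `n * h` characters to spell `X`. Every later phrase has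
length `h`, so the `k`-th repeat phrase starts at block `k` of the second half, and since its
source, block `π k`, lies inside `X`, it says exactly that this block equals `x (π k)`. A string
satisfies the encoding iff it is `X` followed by these blocks, i.e. iff it is `X ++ Y`. -/

/-- A phrase of an LZ77-type encoding: a literal character, or a repeat phrase
given by source position `p` and length `ℓ` (positions are 0-based). -/
inductive Phrase (α : Type) where
  | lit (c : α)
  | rep (p ℓ : ℕ)

/-- The length of the text covered by a phrase. -/
def Phrase.len {α : Type} : Phrase α → ℕ
  | .lit _ => 1
  | .rep _ ℓ => ℓ

/-- The (0-based) starting position of the `j`-th phrase of the encoding `E`. -/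
def startPos {α : Type} (E : List (Phrase α)) (j : ℕ) : ℕ :=
  ((E.take j).map Phrase.len).sum

/-- The constraint a phrase starting at position `i` imposes on the string `X`:
a literal `(i, c)` asserts `X[i] = c`; a repeat phrase `(p, i, ℓ)` asserts
`p < i` and `X[p+k] = X[i+k]` for all `0 ≤ k < ℓ`. -/
def PhraseOK {α : Type} (X : List α) (i : ℕ) : Phrase α → Prop
  | .lit c => X[i]? = some c
  | .rep p ℓ => p < i ∧ ∀ k < ℓ, X[p + k]? = X[i + k]?

/-- `E` is a valid LZ77-type encoding of the string `X`: consecutive phrases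
cover `X` exactly and every phrase constraint holds. -/
def Satisfies {α : Type} (X : List α) (E : List (Phrase α)) : Prop :=
  (E.map Phrase.len).sum = X.length ∧
  ∀ j < E.length, PhraseOK X (startPos E j) (E.getD j (Phrase.rep 0 0))

namespace List
variable {α : Type}

theorem length_flatten_ofFn_of_length_eq {n h : ℕ} (x : Fin n → List α)
    (hx : ∀ i, (x i).length = h) : (ofFn x).flatten.length = n * h := by
  rw [length_flatten, map_ofFn, show length ∘ x = fun _ => h from funext hx]
  simp

theorem getElem?_flatten_ofFn_of_length_eq {n h : ℕ} (x : Fin n → List α)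
    (hx : ∀ i, (x i).length = h) (i : Fin n) {m : ℕ} (hm : m < h) :
    (ofFn x).flatten[i * h + m]? = (x i)[m]? := by
  induction n with
  | zero => exact i.elim0
  | succ n ih =>
    rw [ofFn_succ, flatten_cons]
    cases i using Fin.cases with
    | zero => simpa using getElem?_append_left (by rw [hx]; exact hm)
    | succ i =>
      rw [show (i.succ : ℕ) * h + m = (x 0).length + (i * h + m) by
          rw [hx, Fin.val_succ]; ring,
        getElem?_append_right (Nat.le_add_right _ _), Nat.add_sub_cancel_left]
      exact ih _ (fun j => hx j.succ) i

theorem ext_getElem?_of_blocks {n h : ℕ} {l₁ l₂ : List α} (h₁ : l₁.length = n * h)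
    (h₂ : l₂.length = n * h) (H : ∀ k : Fin n, ∀ m < h, l₁[k * h + m]? = l₂[k * h + m]?) :
    l₁ = l₂ := by
  refine ext_getElem? fun i => ?_
  by_cases hi : i < n * h
  · have hh : 0 < h := Nat.pos_of_mul_pos_left ((Nat.zero_le i).trans_lt hi)
    have hk : i / h < n := (Nat.div_lt_iff_lt_mul hh).2 hi
    simpa [Nat.div_add_mod'] using H ⟨i / h, hk⟩ (i % h) (Nat.mod_lt i hh)
  · rw [getElem?_eq_none (by omega), getElem?_eq_none (by omega)]

theorem eq_flatten_ofFn_iff {n h : ℕ} (y : Fin n → List α) (hy : ∀ k, (y k).length = h)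
    (l : List α) :
    l = (ofFn y).flatten ↔ l.length = n * h ∧ ∀ k : Fin n, ∀ m < h, l[k * h + m]? = (y k)[m]? := by
  constructor
  · rintro rfl
    exact ⟨length_flatten_ofFn_of_length_eq y hy, fun k m hm =>
      getElem?_flatten_ofFn_of_length_eq y hy k hm⟩
  · rintro ⟨hl, H⟩
    refine ext_getElem?_of_blocks hl (length_flatten_ofFn_of_length_eq y hy) fun k m hm => ?_
    rw [H k m hm, getElem?_flatten_ofFn_of_length_eq y hy k hm]

end List

namespace Phrase
variable {α : Type}

@[simp] theorem len_lit (c : α) : (lit c).len = 1 := rfl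

@[simp] theorem len_rep (p ℓ : ℕ) : (rep p ℓ : Phrase α).len = ℓ := rfl

end Phrase

section StartPos
variable {α : Type}

theorem startPos_eq_mul {E : List (Phrase α)} {ℓ : ℕ} (hE : ∀ e ∈ E, e.len = ℓ) {j : ℕ}
    (hj : j ≤ E.length) : startPos E j = j * ℓ := by
  unfold startPos
  rw [List.map_congr_left fun e he => hE e (List.mem_of_mem_take he), List.map_const',
    List.sum_replicate, List.length_take, min_eq_left hj, smul_eq_mul]

theorem sum_map_len_eq_mul {E : List (Phrase α)} {ℓ : ℕ} (hE : ∀ e ∈ E, e.len = ℓ) :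
    (E.map Phrase.len).sum = E.length * ℓ := by
  simpa [startPos] using startPos_eq_mul hE le_rfl

theorem startPos_append_of_le {A B : List (Phrase α)} {j : ℕ} (hj : j ≤ A.length) :
    startPos (A ++ B) j = startPos A j := by
  rw [startPos, List.take_append_of_le_length hj, startPos]

theorem startPos_append_length_add (A B : List (Phrase α)) (k : ℕ) :
    startPos (A ++ B) (A.length + k) = (A.map Phrase.len).sum + startPos B k := by
  rw [startPos, List.take_length_add_append, List.map_append, List.sum_append, startPos]

end StartPos

section Satisfies
variable {α : Type}

theorem satisfies_append_iff (Z : List α) (A B : List (Phrase α)) :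
    Satisfies Z (A ++ B) ↔
      (A.map Phrase.len).sum + (B.map Phrase.len).sum = Z.length ∧
      (∀ j < A.length, PhraseOK Z (startPos A j) (A.getD j (.rep 0 0))) ∧
      ∀ k < B.length,
        PhraseOK Z ((A.map Phrase.len).sum + startPos B k) (B.getD k (.rep 0 0)) := by
  rw [Satisfies, List.map_append, List.sum_append, List.length_append]
  have left : ∀ j < A.length, startPos (A ++ B) j = startPos A j ∧
      (A ++ B).getD j (.rep 0 0) = A.getD j (.rep 0 0) := fun j hj =>
    ⟨startPos_append_of_le hj.le, List.getD_append _ _ _ _ hj⟩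
  have right : ∀ k, startPos (A ++ B) (A.length + k) = (A.map Phrase.len).sum + startPos B k ∧
      (A ++ B).getD (A.length + k) (.rep 0 0) = B.getD k (.rep 0 0) := fun k =>
    ⟨startPos_append_length_add A B k, by
      rw [List.getD_append_right _ _ _ _ (Nat.le_add_right _ _), Nat.add_sub_cancel_left]⟩
  refine and_congr_right fun _ => ⟨fun H => ⟨fun j hj => ?_, fun k hk => ?_⟩, ?_⟩
  · simpa only [left j hj] using H j (by omega)
  · simpa only [right k] using H (A.length + k) (by omega)
  · rintro ⟨HA, HB⟩ j hj
    by_cases hjA : j < A.length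
    · simpa only [left j hjA] using HA j hjA
    · obtain ⟨k, rfl⟩ := Nat.exists_eq_add_of_le (not_lt.1 hjA)
      simpa only [right k] using HB k (by omega)

theorem forall_phraseOK_map_lit_iff (Z L : List α) :
    (∀ j < (L.map Phrase.lit).length,
      PhraseOK Z (startPos (L.map Phrase.lit) j) ((L.map Phrase.lit).getD j (.rep 0 0))) ↔
      L <+: Z := by
  have hlen : ∀ e ∈ L.map Phrase.lit, e.len = 1 := by simp
  rw [List.prefix_iff_getElem?, List.length_map]
  refine forall₂_congr fun j hj => ?_
  rw [startPos_eq_mul hlen (by simpa using hj.le), mul_one,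
    List.getD_eq_getElem _ _ (by simpa using hj), List.getElem_map, PhraseOK]

theorem satisfies_map_lit_append_iff (Z L : List α) (B : List (Phrase α)) :
    Satisfies Z (L.map Phrase.lit ++ B) ↔
      ∃ W, Z = L ++ W ∧ (B.map Phrase.len).sum = W.length ∧
        ∀ k < B.length, PhraseOK (L ++ W) (L.length + startPos B k) (B.getD k (.rep 0 0)) := by
  have hL : ((L.map Phrase.lit).map Phrase.len).sum = L.length := by
    simpa using sum_map_len_eq_mul (E := L.map Phrase.lit) (ℓ := 1) (by simp)
  rw [satisfies_append_iff, forall_phraseOK_map_lit_iff, hL]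
  constructor
  · rintro ⟨hlen, ⟨W, rfl⟩, hB⟩
    exact ⟨W, rfl, by simpa using hlen, hB⟩
  · rintro ⟨W, rfl, hlen, hB⟩
    exact ⟨by simp [hlen], List.prefix_append L W, hB⟩

theorem phraseOK_rep_append_iff {X W : List α} {p i ℓ : ℕ} (hℓ : 0 < ℓ)
    (hp : p + ℓ ≤ X.length) :
    PhraseOK (X ++ W) (X.length + i) (.rep p ℓ) ↔ ∀ m < ℓ, W[i + m]? = X[p + m]? := by
  rw [PhraseOK, and_iff_right (by omega)]
  refine forall₂_congr fun m hm => ?_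
  rw [List.getElem?_append_left (by omega), add_assoc,
    List.getElem?_append_right (Nat.le_add_right _ _), Nat.add_sub_cancel_left, eq_comm]

theorem satisfies_copy_blocks_iff {n h : ℕ} (hh : 0 < h) (x : Fin n → List α)
    (hx : ∀ i, (x i).length = h) (f : Fin n → Fin n) (Z : List α) :
    Satisfies Z ((List.ofFn x).flatten.map Phrase.lit ++
        List.ofFn fun k => Phrase.rep (f k * h) h) ↔
      Z = (List.ofFn x).flatten ++ (List.ofFn fun k => x (f k)).flatten := by
  set X := (List.ofFn x).flatten
  set R : List (Phrase α) := List.ofFn fun k => Phrase.rep (f k * h) h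
  have hX : X.length = n * h := List.length_flatten_ofFn_of_length_eq x hx
  have hR : ∀ e ∈ R, e.len = h := by simp [R]
  have hcopy : ∀ W (k : Fin n), PhraseOK (X ++ W) (X.length + startPos R k) (R.getD k (.rep 0 0))
      ↔ ∀ m < h, W[k * h + m]? = (x (f k))[m]? := by
    intro W k
    have hsrc : f k * h + h ≤ X.length := by
      rw [hX, ← Nat.succ_mul]; exact Nat.mul_le_mul_right h (f k).isLt
    rw [startPos_eq_mul hR (by simp [R]), List.getD_eq_getElem _ _ (by simp [R]),
      List.getElem_ofFn, phraseOK_rep_append_iff hh hsrc]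
    exact forall₂_congr fun m hm => by
      rw [List.getElem?_flatten_ofFn_of_length_eq x hx (f k) hm]
  have hY := List.eq_flatten_ofFn_iff (fun k => x (f k)) (fun k => hx (f k))
  rw [satisfies_map_lit_append_iff, sum_map_len_eq_mul hR, List.length_ofFn]
  constructor
  · rintro ⟨W, rfl, hW, hcop⟩
    rw [(hY W).2 ⟨hW.symm, fun k => (hcopy W k).1 (hcop k k.isLt)⟩]
  · rintro rfl
    obtain ⟨hYlen, hYblocks⟩ := (hY _).1 rfl
    exact ⟨_, rfl, hYlen.symm, fun k hk => (hcopy _ ⟨k, hk⟩).2 (hYblocks ⟨k, hk⟩)⟩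

end Satisfies

/-- Permuting reduces to LZ77 decoding: for strings `x 0, …, x (n-1)` each of
length `h ≥ 1` over `[0..σ-1]` and a permutation `π`, the encoding consisting
of literal phrases spelling `X = x 0 ⋯ x (n-1)` followed by, for each `k`, a
repeat phrase of length `h` with source position `(π k)·h`, is a valid
LZ77-type encoding whose unique decoding is `X · Y` with
`Y = x (π 0) ⋯ x (π (n-1))`. -/
theorem lz77_permuting_reduction {n h σ : ℕ} (hh : 1 ≤ h)
    (x : Fin n → List (Fin σ)) (hx : ∀ i, (x i).length = h)
    (π : Equiv.Perm (Fin n)) :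
    Satisfies ((List.ofFn x).flatten ++ (List.ofFn fun k => x (π k)).flatten)
      (((List.ofFn x).flatten.map Phrase.lit) ++
        List.ofFn (fun k : Fin n => Phrase.rep ((π k : ℕ) * h) h))
    ∧ ∀ Z : List (Fin σ),
        Satisfies Z (((List.ofFn x).flatten.map Phrase.lit) ++
          List.ofFn (fun k : Fin n => Phrase.rep ((π k : ℕ) * h) h)) →
        Z = (List.ofFn x).flatten ++ (List.ofFn fun k => x (π k)).flatten :=
  ⟨(satisfies_copy_blocks_iff hh x hx π _).2 rfl,
    fun Z => (satisfies_copy_blocks_iff hh x hx π Z).1⟩
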